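/- (One-step quadratic error bound for Newton, key estimate in Lemma 2.3) Assume 8α ≤ 1 where α = M ν⁻² F, and set β = ν(1 − 2α). Let u ∈ V be a weak NSE solution, let u_k ∈ V satisfy ‖G u_k‖ ≤ 2 ν⁻¹ F, and let u_{k+1} ∈ V be a Newton step from u_k. Then ‖G(u − u_{k+1})‖ ≤ (M/β) ‖G(u − u_k)‖². -/

import Mathlib

/-!
Subtracting the Newton step from the Navier–Stokes equation gives, for `e = u - u_{k+1}` and
`d = u - u_k`, the error equation `ν ⟨G e, G v⟩ + b(u_k, e, v) + b(e, u_k, v) = -b(d, d, v)`.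
Testing with `v = e` kills `b(u_k, e, e)`, and `‖G u_k‖ ≤ 2F/ν` gives
`|b(e, u_k, e)| ≤ 2αν ‖G e‖²`, leaving `ν(1 - 2α) ‖G e‖² ≤ M ‖G d‖² ‖G e‖`.
-/

open scoped RealInnerProductSpace

lemma le_div_of_mul_sq_le_mul {β c x : ℝ} (hβ : 0 < β) (hc : 0 ≤ c) (hx : 0 ≤ x)
    (h : β * x ^ 2 ≤ c * x) : x ≤ c / β := by
  rw [le_div_iff₀ hβ]
  rcases hx.eq_or_lt with rfl | hx
  · simpa using hc
  · exact le_of_mul_le_mul_right (by nlinarith) hx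

section NavierStokes

variable {V W : Type*} [AddCommGroup V] [Module ℝ V]
  [NormedAddCommGroup W] [InnerProductSpace ℝ W]
  (G : V →ₗ[ℝ] W) (b : V →ₗ[ℝ] V →ₗ[ℝ] V →ₗ[ℝ] ℝ) (f : V →ₗ[ℝ] ℝ) (ν : ℝ)

def IsWeakNSESolution (u : V) : Prop :=
  ∀ v : V, ν * ⟪G u, G v⟫ + b u u v = f v

def IsNewtonStep (uk uk1 : V) : Prop :=
  ∀ v : V, ν * ⟪G uk1, G v⟫ + b uk uk1 v + b uk1 uk v = f v + b uk uk v

variable {G b f ν}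

theorem IsNewtonStep.error_eq {u uk uk1 : V} (hu : IsWeakNSESolution G b f ν u)
    (hstep : IsNewtonStep G b f ν uk uk1) (v : V) :
    ν * ⟪G (u - uk1), G v⟫ + b uk (u - uk1) v + b (u - uk1) uk v
      = -b (u - uk) (u - uk) v := by
  have hsol := hu v
  have hnewton := hstep v
  simp only [map_sub, LinearMap.sub_apply, inner_sub_left] at hsol hnewton ⊢
  linarith

theorem IsNewtonStep.error_energy_le {M : ℝ} (hbskew : ∀ u v : V, b u v v = 0)
    (hb : ∀ u w v : V, |b u w v| ≤ M * ‖G u‖ * ‖G w‖ * ‖G v‖)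
    {u uk uk1 : V} (hu : IsWeakNSESolution G b f ν u) (hstep : IsNewtonStep G b f ν uk uk1) :
    ν * ‖G (u - uk1)‖ ^ 2
      ≤ M * ‖G uk‖ * ‖G (u - uk1)‖ ^ 2 + M * ‖G (u - uk)‖ ^ 2 * ‖G (u - uk1)‖ := by
  have henergy := hstep.error_eq hu (u - uk1)
  rw [hbskew, real_inner_self_eq_norm_sq] at henergy
  nlinarith [neg_le_abs (b (u - uk1) uk (u - uk1)), hb (u - uk1) uk (u - uk1),
    neg_le_abs (b (u - uk) (u - uk) (u - uk1)), hb (u - uk) (u - uk) (u - uk1)]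

end NavierStokes

theorem newton_one_step_quadratic_general
    {V W : Type*} [NormedAddCommGroup V] [InnerProductSpace ℝ V]
    [NormedAddCommGroup W] [InnerProductSpace ℝ W]
    (G : V →ₗ[ℝ] W) (b : V →ₗ[ℝ] V →ₗ[ℝ] V →ₗ[ℝ] ℝ) (f : V →ₗ[ℝ] ℝ)
    (M F ν : ℝ) (hM : 0 < M) (hν : 0 < ν)
    (hbskew : ∀ u v : V, b u v v = 0)
    (hb2 : ∀ u w v : V, |b u w v| ≤ M * ‖G u‖ * ‖G w‖ * ‖G v‖)
    (u : V) (hu : ∀ v : V, ν * (inner ℝ (G u) (G v) : ℝ) + b u u v = f v)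
    (hα : 8 * (M * F / ν ^ 2) ≤ 1)
    (uk uk1 : V) (hk : ‖G uk‖ ≤ 2 * ν⁻¹ * F)
    (hstep : ∀ v : V, ν * (inner ℝ (G uk1) (G v) : ℝ) + b uk uk1 v + b uk1 uk v
      = f v + b uk uk v)
    : ‖G (u - uk1)‖ ≤ (M / (ν * (1 - 2 * (M * F / ν ^ 2)))) * ‖G (u - uk)‖ ^ 2 := by
  set α := M * F / ν ^ 2 with hα_def
  have hβ : 0 < ν * (1 - 2 * α) := mul_pos hν (by linarith)
  have hM_uk : M * ‖G uk‖ ≤ 2 * α * ν := by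
    calc M * ‖G uk‖ ≤ M * (2 * ν⁻¹ * F) := mul_le_mul_of_nonneg_left hk hM.le
      _ = 2 * α * ν := by rw [hα_def]; field_simp
  have henergy := IsNewtonStep.error_energy_le hbskew hb2 hu hstep
  have hcoercive : ν * (1 - 2 * α) * ‖G (u - uk1)‖ ^ 2 ≤ M * ‖G (u - uk)‖ ^ 2 * ‖G (u - uk1)‖ := by
    nlinarith [mul_le_mul_of_nonneg_right hM_uk (sq_nonneg ‖G (u - uk1)‖)]
  rw [div_mul_eq_mul_div]
  exact le_div_of_mul_sq_le_mul hβ (by positivity) (norm_nonneg _) hcoercive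

theorem newton_one_step_quadratic
    {V W : Type*} [NormedAddCommGroup V] [InnerProductSpace ℝ V]
    [NormedAddCommGroup W] [InnerProductSpace ℝ W]
    (G : V →ₗ[ℝ] W) (b : V →ₗ[ℝ] V →ₗ[ℝ] V →ₗ[ℝ] ℝ) (f : V →ₗ[ℝ] ℝ)
    (M F ν : ℝ) (hM : 0 < M) (hF : 0 ≤ F) (hν : 0 < ν)
    (hbskew : ∀ u v : V, b u v v = 0)
    (hb1 : ∀ u w v : V, |b u w v| ≤ M * Real.sqrt ‖u‖ * Real.sqrt ‖G u‖ * ‖G w‖ * ‖G v‖)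
    (hb2 : ∀ u w v : V, |b u w v| ≤ M * ‖G u‖ * ‖G w‖ * ‖G v‖)
    (hb3 : ∀ u w v : V, |b u w v| ≤ M * ‖G u‖ * ‖G w‖ * Real.sqrt ‖v‖ * Real.sqrt ‖G v‖)
    (hf : ∀ v : V, |f v| ≤ F * ‖G v‖)
    (u : V) (hu : ∀ v : V, ν * (inner ℝ (G u) (G v) : ℝ) + b u u v = f v)
    (hα : 8 * (M * F / ν ^ 2) ≤ 1)
    (uk uk1 : V) (hk : ‖G uk‖ ≤ 2 * ν⁻¹ * F)
    (hstep : ∀ v : V, ν * (inner ℝ (G uk1) (G v) : ℝ) + b uk uk1 v + b uk1 uk v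
      = f v + b uk uk v)
    : ‖G (u - uk1)‖ ≤ (M / (ν * (1 - 2 * (M * F / ν ^ 2)))) * ‖G (u - uk)‖ ^ 2 :=
  newton_one_step_quadratic_general G b f M F ν hM hν hbskew hb2 u hu hα uk uk1 hk hstep
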